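/- Fix nonzero real numbers α₁, α₂. Then: (i) there is a constant C > 0 such that for every n and every set E of n points in ℝ², the number of ordered triples (x₁, x₂, x₃) of pairwise distinct points of E with x₁ · x₂ = α₁ and x₂ · x₃ = α₂ is at most C · n²; and (ii) there exist a constant c > 0 and N such that for every n > N there is a set E of n points in ℝ² containing at least c · n² such triples. That is, the maximum number of dot product hinges of type (α₁, α₂) in an n-point planar set is ≈ n². -/

import Mathlib

/-! If `x₁` and `x₃` are not parallel, the two linear conditions `x₁ ⬝ y = α₁`, `y ⬝ x₃ = α₂`
pin down the middle point `y` of a hinge, so the hinge is determined by its endpoints; if they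
are parallel, then `x₃ = (α₂ / α₁) x₁` is determined by `x₁`. Either way a hinge is encoded by
two points of `E` and one bit, giving at most `2 n²` hinges. Conversely, the hub `(1, 0)` forms a
hinge with every pair of points `(α₁, s)`, `(α₂, t)`; splitting `n` points evenly between the two
vertical lines gives about `n² / 4` hinges. -/

open scoped InnerProductSpace

noncomputable section

/-- Points in the plane. -/
abbrev Pt2 : Type := EuclideanSpace ℝ (Fin 2)

/-- The set of dot product hinges (2-chains) of type `(α₁, α₂)` in a point set `E`:
ordered triples `(x₁, x₂, x₃)` of pairwise distinct points of `E` with `x₁ ⬝ x₂ = α₁`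
and `x₂ ⬝ x₃ = α₂`. -/
def dpHinges (E : Finset Pt2) (α₁ α₂ : ℝ) : Set (Pt2 × Pt2 × Pt2) :=
  {x | x.1 ∈ E ∧ x.2.1 ∈ E ∧ x.2.2 ∈ E ∧
    x.1 ≠ x.2.1 ∧ x.1 ≠ x.2.2 ∧ x.2.1 ≠ x.2.2 ∧
    ⟪x.1, x.2.1⟫_ℝ = α₁ ∧ ⟪x.2.1, x.2.2⟫_ℝ = α₂}

open Finset Module

theorem eq_div_smul_of_inner_eq_of_inner_eq {E : Type*} [NormedAddCommGroup E]
    [InnerProductSpace ℝ E] (hE : finrank ℝ E = 2) {a b : ℝ} (ha : a ≠ 0) {x y y' z : E}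
    (hy : y ≠ y') (hxy : ⟪x, y⟫_ℝ = a) (hxy' : ⟪x, y'⟫_ℝ = a) (hyz : ⟪y, z⟫_ℝ = b)
    (hyz' : ⟪y', z⟫_ℝ = b) : z = (b / a) • x := by
  have : Fact (finrank ℝ E = 1 + 1) := ⟨hE⟩
  have hx : x ∈ (ℝ ∙ (y - y'))ᗮ := by
    rw [Submodule.mem_orthogonal_singleton_iff_inner_left, inner_sub_right, hxy, hxy', sub_self]
  have hz : z ∈ (ℝ ∙ (y - y'))ᗮ := by
    rw [Submodule.mem_orthogonal_singleton_iff_inner_right, inner_sub_left, hyz, hyz', sub_self]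
  have hx0 : (⟨x, hx⟩ : (ℝ ∙ (y - y'))ᗮ) ≠ 0 := by
    rintro h
    rw [Submodule.mk_eq_zero] at h
    rw [h, inner_zero_left] at hxy
    exact ha hxy.symm
  obtain ⟨c, hc⟩ := (finrank_eq_one_iff_of_nonzero' _ hx0).mp
    (Submodule.finrank_orthogonal_span_singleton (sub_ne_zero.mpr hy)) ⟨z, hz⟩
  have hzx : z = c • x := (congrArg Subtype.val hc).symm
  rw [hzx, inner_smul_right, real_inner_comm, hxy] at hyz
  rw [hzx, ← hyz, mul_div_cancel_right₀ c ha]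

theorem finite_dpHinges (E : Finset Pt2) (α₁ α₂ : ℝ) : (dpHinges E α₁ α₂).Finite :=
  (E ×ˢ E ×ˢ E).finite_toSet.subset fun _ hx => by simp [hx.1, hx.2.1, hx.2.2.1]

theorem ncard_dpHinges_le (E : Finset Pt2) (α₁ α₂ : ℝ) (h₁ : α₁ ≠ 0) :
    (dpHinges E α₁ α₂).ncard ≤ 2 * E.card ^ 2 := by
  classical
  let encode : Pt2 × Pt2 × Pt2 → Pt2 × Pt2 × Bool := fun x =>
    if x.2.2 = (α₂ / α₁) • x.1 then (x.1, x.2.1, true) else (x.1, x.2.2, false)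
  have maps : ∀ x ∈ dpHinges E α₁ α₂, encode x ∈ (E ×ˢ E ×ˢ univ : Finset _) := by
    rintro ⟨x₁, x₂, x₃⟩ ⟨h₁, h₂, h₃, -⟩
    by_cases hx : x₃ = (α₂ / α₁) • x₁ <;> simp [encode, hx, h₁, h₂, h₃]
  have inj : Set.InjOn encode (dpHinges E α₁ α₂) := by
    rintro ⟨x₁, x₂, x₃⟩ ⟨-, -, -, -, -, -, hx₁₂, hx₂₃⟩ ⟨y₁, y₂, y₃⟩ ⟨-, -, -, -, -, -, hy₁₂, hy₂₃⟩ h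
    by_cases hx : x₃ = (α₂ / α₁) • x₁ <;> by_cases hy : y₃ = (α₂ / α₁) • y₁ <;>
      simp only [encode, hx, hy, if_true, if_false, Prod.mk.injEq, Bool.true_eq_false,
        Bool.false_eq_true, and_false, and_true] at h
    · obtain ⟨rfl, rfl⟩ := h
      rw [hx, hy]
    · obtain ⟨rfl, rfl⟩ := h
      refine Prod.ext rfl (Prod.ext ?_ rfl)
      by_contra hne
      exact hx (eq_div_smul_of_inner_eq_of_inner_eq finrank_euclideanSpace_fin h₁ hne hx₁₂ hy₁₂
        hx₂₃ hy₂₃)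
  calc (dpHinges E α₁ α₂).ncard ≤ ((E ×ˢ E ×ˢ univ : Finset (Pt2 × Pt2 × Bool)) : Set _).ncard :=
        Set.ncard_le_ncard_of_injOn encode maps inj (Finset.finite_toSet _)
    _ = 2 * E.card ^ 2 := by
        rw [Set.ncard_coe_finset, card_product, card_product, card_univ, Fintype.card_bool]
        ring

theorem card_mul_card_le_ncard_dpHinges {E A B : Finset Pt2} {p : Pt2} {α₁ α₂ : ℝ}
    (hA : A ⊆ E) (hB : B ⊆ E) (hp : p ∈ E) (hpA : p ∉ A) (hpB : p ∉ B) (hAB : Disjoint A B)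
    (hAp : ∀ a ∈ A, ⟪a, p⟫_ℝ = α₁) (hBp : ∀ b ∈ B, ⟪p, b⟫_ℝ = α₂) :
    A.card * B.card ≤ (dpHinges E α₁ α₂).ncard := by
  rw [← card_product, ← Set.ncard_coe_finset]
  refine Set.ncard_le_ncard_of_injOn (fun q => (q.1, p, q.2)) ?_ ?_ (finite_dpHinges E α₁ α₂)
  · rintro ⟨a, b⟩ hab
    rw [coe_product, Set.mem_prod] at hab
    exact ⟨hA hab.1, hp, hB hab.2, ne_of_mem_of_not_mem hab.1 hpA,
      disjoint_left.mp hAB hab.1 ∘ (· ▸ hab.2), (ne_of_mem_of_not_mem hab.2 hpB).symm,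
      hAp a hab.1, hBp b hab.2⟩
  · rintro ⟨a, b⟩ - ⟨a', b'⟩ - h
    simp only [Prod.mk.injEq, true_and] at h
    rw [h.1, h.2]

theorem real_inner_vec₂ (a b c d : ℝ) : ⟪!₂[a, b], !₂[c, d]⟫_ℝ = a * c + b * d := by
  simp [PiLp.inner_apply, Fin.sum_univ_two, mul_comm]

theorem exists_card_eq_and_mul_le_ncard_dpHinges (α₁ α₂ : ℝ) {m n : ℕ} (hmn : m < n) :
    ∃ E : Finset Pt2, E.card = n ∧ m * (n - 1 - m) ≤ (dpHinges E α₁ α₂).ncard := by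
  let f : ℕ → Pt2 := fun k => !₂[if k = 0 then 1 else if k ≤ m then α₁ else α₂, k]
  have hf : Function.Injective f := fun i j h =>
    Nat.cast_injective (R := ℝ) (congrArg (fun v : Pt2 => v 1) h)
  refine ⟨(range n).image f, by rw [card_image_of_injective _ hf, card_range], ?_⟩
  have key := card_mul_card_le_ncard_dpHinges (E := (range n).image f)
    (A := (Ioc 0 m).image f) (B := (Ioo m n).image f) (p := f 0) (α₁ := α₁) (α₂ := α₂)
    (image_subset_image fun k hk => mem_range.2 ((mem_Ioc.1 hk).2.trans_lt hmn))
    (image_subset_image fun k hk => mem_range.2 (mem_Ioo.1 hk).2)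
    (mem_image_of_mem f (mem_range.2 (Nat.zero_lt_of_lt hmn)))
    (by simp [hf.mem_finset_image])
    (by simp [hf.mem_finset_image])
    ((disjoint_image hf).mpr <| disjoint_left.mpr fun k hk hk' =>
      (mem_Ioc.1 hk).2.not_gt (mem_Ioo.1 hk').1)
    (forall_mem_image.mpr fun k hk => by
      simp only [mem_Ioc] at hk
      simp [f, real_inner_vec₂, hk.2, hk.1.ne'])
    (forall_mem_image.mpr fun k hk => by
      simp only [mem_Ioo] at hk
      simp [f, real_inner_vec₂, hk.1.not_ge, (hk.1.trans_le' (Nat.zero_le m)).ne'])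
  rwa [card_image_of_injective _ hf, card_image_of_injective _ hf, Nat.card_Ioc, Nat.card_Ioo,
    Nat.sub_zero, Nat.sub_right_comm] at key

theorem dotProduct_hinge_bounds_general (α₁ α₂ : ℝ) (h₁ : α₁ ≠ 0) :
    (∃ C : ℝ, 0 < C ∧ ∀ (n : ℕ) (E : Finset Pt2), E.card = n →
      ((dpHinges E α₁ α₂).ncard : ℝ) ≤ C * (n : ℝ) ^ 2) ∧
    (∃ c : ℝ, 0 < c ∧ ∃ N : ℕ, ∀ n : ℕ, N < n →
      ∃ E : Finset Pt2, E.card = n ∧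
        c * (n : ℝ) ^ 2 ≤ ((dpHinges E α₁ α₂).ncard : ℝ)) := by
  refine ⟨⟨2, two_pos, fun n E hE => ?_⟩, ⟨1 / 16, by norm_num, 3, fun n hn => ?_⟩⟩
  · rw [← hE]
    exact_mod_cast ncard_dpHinges_le E α₁ α₂ h₁
  · set m := (n - 1) / 2
    obtain ⟨E, hE, hle⟩ := exists_card_eq_and_mul_le_ncard_dpHinges α₁ α₂ (m := m) (n := n)
      (by omega)
    have hsq : n ^ 2 ≤ 16 * (m * (n - 1 - m)) :=
      calc n ^ 2 = n * n := sq n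
        _ ≤ (4 * m) * (4 * (n - 1 - m)) := Nat.mul_le_mul (by omega) (by omega)
        _ = 16 * (m * (n - 1 - m)) := by ring
    refine ⟨E, hE, ?_⟩
    have : (n : ℝ) ^ 2 ≤ 16 * (dpHinges E α₁ α₂).ncard := by
      exact_mod_cast hsq.trans (Nat.mul_le_mul_left 16 hle)
    linarith

/-- **dot product hinges.** Fix nonzero reals `α₁, α₂`.  (i) There is
`C > 0` such that every set of `n` points in the plane contains at most `C · n²` dot
product hinges of type `(α₁, α₂)`; (ii) there are `c > 0` and `N` such that for every
`n > N` some set of `n` points in the plane contains at least `c · n²` of them.  That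
is, the maximum number of dot product hinges of type `(α₁, α₂)` is `≈ n²`. -/
theorem dotProduct_hinge_bounds (α₁ α₂ : ℝ) (h₁ : α₁ ≠ 0) (h₂ : α₂ ≠ 0) :
    (∃ C : ℝ, 0 < C ∧ ∀ (n : ℕ) (E : Finset Pt2), E.card = n →
      ((dpHinges E α₁ α₂).ncard : ℝ) ≤ C * (n : ℝ) ^ 2) ∧
    (∃ c : ℝ, 0 < c ∧ ∃ N : ℕ, ∀ n : ℕ, N < n →
      ∃ E : Finset Pt2, E.card = n ∧
        c * (n : ℝ) ^ 2 ≤ ((dpHinges E α₁ α₂).ncard : ℝ)) :=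
  dotProduct_hinge_bounds_general α₁ α₂ h₁
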